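/- Let g : I → ℝ³ be a smooth unit speed space-like curve on H² (⟨g,g⟩ = −1, ⟨g',g'⟩ = 1) with geodesic curvature κ_g. Fix constants θ > 0 and u > 0, set ξ₂ = coth(θ)·ln(u), assume tanh(ξ₂) ≠ 0 and tanh(ξ₂)·κ_g(v) < 1 for all v, and let x(v) = u·sinh(θ)·(cosh(ξ₂)·g(v) + sinh(ξ₂)·g(v) × g'(v)) be the v-parameter curve of the space-like constant slope surface lying in the time-like cone. Then β(v) = ∫₀ᵛ x(t)dt is a time-like Bertrand curve: ⟨β'(v), β'(v)⟩ < 0 for all v, and with the non-zero constants A = u·sinh(θ)·cosh(ξ₂) and C = u·sinh(θ)·sinh(ξ₂), the curvature κ = ‖β' × β''‖ / (−⟨β', β'⟩)^{3/2} and torsion τ = det(β', β'', β''') / ‖β' × β''‖² of β satisfy A·κ(v) + C·τ(v) = 1 for all v ∈ I. -/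

import Mathlib

noncomputable section

open Real

/-- The Lorentzian (Minkowski) inner product on ℝ³: ⟨x,y⟩ = x₁y₁ + x₂y₂ − x₃y₃. -/
def mink (x y : Fin 3 → ℝ) : ℝ := x 0 * y 0 + x 1 * y 1 - x 2 * y 2

/-- The Lorentzian cross product on ℝ³:
x × y = (x₂y₃ − x₃y₂, x₃y₁ − x₁y₃, x₂y₁ − x₁y₂). -/
def mcross (x y : Fin 3 → ℝ) : Fin 3 → ℝ :=
  ![x 1 * y 2 - x 2 * y 1, x 2 * y 0 - x 0 * y 2, x 1 * y 0 - x 0 * y 1]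

/-- Determinant of three vectors in ℝ³ (as the rows of a 3×3 matrix). -/
def mdet (x y z : Fin 3 → ℝ) : ℝ := Matrix.det (Matrix.of ![x, y, z])

/-- The pseudo norm ‖x‖ = √|⟨x,x⟩|. -/
def mnorm (x : Fin 3 → ℝ) : ℝ := Real.sqrt |mink x x|

section helpers

lemma mink_symm (x y : Fin 3 → ℝ) : mink x y = mink y x := by simp [mink]; ring

lemma mink_cross (x y z : Fin 3 → ℝ) : mink (mcross x y) z = mdet x y z := by
  simp [mink, mcross, mdet, Matrix.det_fin_three]; ring

lemma mdet_expand (x y z : Fin 3 → ℝ) : mdet x y z =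
    x 0 * y 1 * z 2 - x 0 * y 2 * z 1 - x 1 * y 0 * z 2 + x 1 * y 2 * z 0
      + x 2 * y 0 * z 1 - x 2 * y 1 * z 0 := by
  simp [mdet, Matrix.det_fin_three]

lemma mdet_rep1 (x y : Fin 3 → ℝ) : mdet x y x = 0 := by rw [mdet_expand]; ring

lemma mdet_rep2 (x y : Fin 3 → ℝ) : mdet x y y = 0 := by rw [mdet_expand]; ring

lemma mink_cross_self (x y : Fin 3 → ℝ) :
    mink (mcross x y) (mcross x y) = mink x y ^ 2 - mink x x * mink y y := by
  simp [mink, mcross]; ring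

lemma mcross_self (x : Fin 3 → ℝ) : mcross x x = 0 := by
  funext i; fin_cases i <;> (simp [mcross]; ring)

lemma mcross_anti (x y : Fin 3 → ℝ) : mcross x y = -mcross y x := by
  funext i; fin_cases i <;> (simp [mcross]; ring)

lemma mcross_cross_left (x y : Fin 3 → ℝ) :
    mcross x (mcross x y) = mink x x • y - mink x y • x := by
  funext i; fin_cases i <;> (simp [mink, mcross]; ring)

lemma mcross_cross_right (x y : Fin 3 → ℝ) :
    mcross (mcross x y) y = mink y y • x - mink x y • y := by
  funext i; fin_cases i <;> (simp [mink, mcross]; ring)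

lemma expand_basis (x y w : Fin 3 → ℝ) :
    (mink x y ^ 2 - mink x x * mink y y) • w =
      (mink w y * mink x y - mink w x * mink y y) • x
      + (mink w x * mink x y - mink w y * mink x x) • y
      + mink w (mcross x y) • mcross x y := by
  funext i; fin_cases i <;> (simp [mink, mcross]; ring)

lemma mcross_add_right (x y z : Fin 3 → ℝ) : mcross x (y + z) = mcross x y + mcross x z := by
  funext i; fin_cases i <;> (simp [mcross]; ring)

lemma mcross_smul_right (k : ℝ) (x y : Fin 3 → ℝ) : mcross x (k • y) = k • mcross x y := by
  funext i; fin_cases i <;> (simp [mcross]; ring)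

lemma mink_comb3 (p1 q1 r1 p2 q2 r2 : ℝ) (x y n : Fin 3 → ℝ) :
    mink (p1•x+q1•y+r1•n) (p2•x+q2•y+r2•n) =
      p1*p2 * mink x x + q1*q2 * mink y y + r1*r2 * mink n n
      + (p1*q2+q1*p2) * mink x y + (p1*r2+r1*p2) * mink x n + (q1*r2+r1*q2) * mink y n := by
  simp [mink]; ring

lemma mcross_comb3 (p1 q1 r1 p2 q2 r2 : ℝ) (x y n : Fin 3 → ℝ) :
    mcross (p1•x+q1•y+r1•n) (p2•x+q2•y+r2•n) =
      (p1*q2-q1*p2) • mcross x y + (p1*r2-r1*p2) • mcross x n + (q1*r2-r1*q2) • mcross y n := by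
  funext i; fin_cases i <;> (simp [mcross]; ring)

lemma hasDerivAt_mink {f h : ℝ → Fin 3 → ℝ} {f' h' : Fin 3 → ℝ} {t : ℝ}
    (hf : HasDerivAt f f' t) (hh : HasDerivAt h h' t) :
    HasDerivAt (fun s => mink (f s) (h s)) (mink f' (h t) + mink (f t) h') t := by
  have Hf := hasDerivAt_pi.mp hf
  have Hh := hasDerivAt_pi.mp hh
  have : HasDerivAt (fun s => f s 0 * h s 0 + f s 1 * h s 1 - f s 2 * h s 2)
      ((f' 0 * h t 0 + f t 0 * h' 0) + (f' 1 * h t 1 + f t 1 * h' 1)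
        - (f' 2 * h t 2 + f t 2 * h' 2)) t :=
    (((Hf 0).mul (Hh 0)).add ((Hf 1).mul (Hh 1))).sub ((Hf 2).mul (Hh 2))
  convert this using 1 <;> simp [mink] <;> ring

lemma hasDerivAt_mcross {f h : ℝ → Fin 3 → ℝ} {f' h' : Fin 3 → ℝ} {t : ℝ}
    (hf : HasDerivAt f f' t) (hh : HasDerivAt h h' t) :
    HasDerivAt (fun s => mcross (f s) (h s)) (mcross f' (h t) + mcross (f t) h') t := by
  have Hf := hasDerivAt_pi.mp hf
  have Hh := hasDerivAt_pi.mp hh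
  rw [hasDerivAt_pi]
  intro i
  fin_cases i
  · have : HasDerivAt (fun s => f s 1 * h s 2 - f s 2 * h s 1)
        ((f' 1 * h t 2 + f t 1 * h' 2) - (f' 2 * h t 1 + f t 2 * h' 1)) t :=
      ((Hf 1).mul (Hh 2)).sub ((Hf 2).mul (Hh 1))
    exact (this.congr_deriv (by simp [mcross] <;> ring)).congr_of_eventuallyEq
      (Filter.Eventually.of_forall fun s => by simp [mcross] <;> ring)
  · have : HasDerivAt (fun s => f s 2 * h s 0 - f s 0 * h s 2)
        ((f' 2 * h t 0 + f t 2 * h' 0) - (f' 0 * h t 2 + f t 0 * h' 2)) t :=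
      ((Hf 2).mul (Hh 0)).sub ((Hf 0).mul (Hh 2))
    exact (this.congr_deriv (by simp [mcross] <;> ring)).congr_of_eventuallyEq
      (Filter.Eventually.of_forall fun s => by simp [mcross] <;> ring)
  · have : HasDerivAt (fun s => f s 1 * h s 0 - f s 0 * h s 1)
        ((f' 1 * h t 0 + f t 1 * h' 0) - (f' 0 * h t 1 + f t 0 * h' 1)) t :=
      ((Hf 1).mul (Hh 0)).sub ((Hf 0).mul (Hh 1))
    exact (this.congr_deriv (by simp [mcross] <;> ring)).congr_of_eventuallyEq
      (Filter.Eventually.of_forall fun s => by simp [mcross] <;> ring)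

end helpers

/-- the integral β(v) = ∫₀ᵛ x(t)dt of the v-parameter curve
x(v) = u·sinh θ·(cosh ξ₂·g(v) + sinh ξ₂·g(v) × g'(v)) of a space-like constant slope
surface lying in the time-like cone is a time-like Bertrand curve: β' is time-like
and with the non-zero constants A = u·sinh θ·cosh ξ₂, C = u·sinh θ·sinh ξ₂ one has
A·κ + C·τ = 1 on I. -/
theorem constant_slope_surface_gives_timelike_bertrand
    (a b : ℝ) (I : Set ℝ) (hI : I = Set.Ioo a b) (h0 : (0:ℝ) ∈ I)
    (g : ℝ → Fin 3 → ℝ) (hg : ContDiff ℝ (⊤ : ℕ∞) g)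
    (hg1 : ∀ v ∈ I, mink (g v) (g v) = -1)
    (hg2 : ∀ v ∈ I, mink (deriv g v) (deriv g v) = 1)
    (κg : ℝ → ℝ) (hκg : ∀ v, κg v = mdet (g v) (deriv g v) (deriv (deriv g) v))
    (θ u : ℝ) (hθ : 0 < θ) (hu : 0 < u)
    (ξ : ℝ) (hξ : ξ = (Real.cosh θ / Real.sinh θ) * Real.log u)
    (hξ0 : Real.tanh ξ ≠ 0)
    (hξκ : ∀ v ∈ I, Real.tanh ξ * κg v < 1)
    (x : ℝ → Fin 3 → ℝ)
    (hx : ∀ v, x v = (u * Real.sinh θ) •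
        (Real.cosh ξ • g v + Real.sinh ξ • mcross (g v) (deriv g v)))
    (β : ℝ → Fin 3 → ℝ) (hβ : ∀ v, β v = ∫ w in (0:ℝ)..v, x w)
    (κ τ : ℝ → ℝ)
    (hκdef : ∀ v, κ v = mnorm (mcross (deriv β v) (deriv (deriv β) v)) /
        (-(mink (deriv β v) (deriv β v))) ^ (3/2 : ℝ))
    (hτdef : ∀ v, τ v =
        mdet (deriv β v) (deriv (deriv β) v) (deriv (deriv (deriv β)) v) /
        (mnorm (mcross (deriv β v) (deriv (deriv β) v))) ^ 2)
    (A C : ℝ) (hA : A = u * Real.sinh θ * Real.cosh ξ)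
    (hC : C = u * Real.sinh θ * Real.sinh ξ) :
    A ≠ 0 ∧ C ≠ 0 ∧
      ∀ v ∈ I, mink (deriv β v) (deriv β v) < 0 ∧ A * κ v + C * τ v = 1 := by
  subst hI
  set m := u * Real.sinh θ with hmdef
  have hm : 0 < m := mul_pos hu (Real.sinh_pos_iff.mpr hθ)
  have hc0 : 0 < Real.cosh ξ := Real.cosh_pos ξ
  have hs0 : Real.sinh ξ ≠ 0 := by
    intro h; exact hξ0 (by rw [Real.tanh_eq_sinh_div_cosh, h, zero_div])
  have hcs : Real.cosh ξ ^ 2 - Real.sinh ξ ^ 2 = 1 := Real.cosh_sq_sub_sinh_sq ξ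
  set c := Real.cosh ξ with hcdef
  set s := Real.sinh ξ with hsdef
  -- differentiability
  have hgi : ContDiff ℝ (⊤ : ℕ∞) g := hg.of_le (by simp)
  have hgi1 : ContDiff ℝ (⊤ : ℕ∞) (deriv g) := (contDiff_infty_iff_deriv.mp hgi).2
  have hgi2 : ContDiff ℝ (⊤ : ℕ∞) (deriv (deriv g)) := (contDiff_infty_iff_deriv.mp hgi1).2
  have hdg : Differentiable ℝ g := hgi.differentiable (by simp)
  have hdg1 : Differentiable ℝ (deriv g) := hgi1.differentiable (by simp)
  have hdg2 : Differentiable ℝ (deriv (deriv g)) := hgi2.differentiable (by simp)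
  have hop : IsOpen (Set.Ioo a b) := isOpen_Ioo
  -- κg differentiable
  have hκgd : Differentiable ℝ κg := by
    have hκfun : κg = fun t => g t 0 * deriv g t 1 * deriv (deriv g) t 2
        - g t 0 * deriv g t 2 * deriv (deriv g) t 1
        - g t 1 * deriv g t 0 * deriv (deriv g) t 2
        + g t 1 * deriv g t 2 * deriv (deriv g) t 0
        + g t 2 * deriv g t 0 * deriv (deriv g) t 1
        - g t 2 * deriv g t 1 * deriv (deriv g) t 0 := by
      funext t; rw [hκg t, mdet_expand]
    have c0 : ∀ i, Differentiable ℝ (fun t => g t i) := fun i => differentiable_pi.mp hdg i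
    have c1 : ∀ i, Differentiable ℝ (fun t => deriv g t i) := fun i => differentiable_pi.mp hdg1 i
    have c2 : ∀ i, Differentiable ℝ (fun t => deriv (deriv g) t i) :=
      fun i => differentiable_pi.mp hdg2 i
    rw [hκfun]
    exact ((((((c0 0).mul (c1 1)).mul (c2 2)).sub (((c0 0).mul (c1 2)).mul (c2 1))).sub
      (((c0 1).mul (c1 0)).mul (c2 2))).add (((c0 1).mul (c1 2)).mul (c2 0))).add
      (((c0 2).mul (c1 0)).mul (c2 1)) |>.sub (((c0 2).mul (c1 1)).mul (c2 0))
  -- x as a nicer function, its derivative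
  have hxfun : x = fun t => (m * c) • g t + (m * s) • mcross (g t) (deriv g t) := by
    funext t; rw [hx t, smul_add, smul_smul, smul_smul]
  have hxd : ∀ t, HasDerivAt x
      ((m * c) • deriv g t + (m * s) • mcross (g t) (deriv (deriv g) t)) t := by
    intro t
    rw [hxfun]
    have h1 : HasDerivAt (fun r => (m * c) • g r) ((m * c) • deriv g t) t :=
      ((hdg t).hasDerivAt).const_smul (m * c)
    have h2 : HasDerivAt (fun r => mcross (g r) (deriv g r))
        (mcross (deriv g t) (deriv g t) + mcross (g t) (deriv (deriv g) t)) t :=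
      hasDerivAt_mcross (hdg t).hasDerivAt (hdg1 t).hasDerivAt
    have h3 := h1.add (h2.const_smul (m * s))
    refine h3.congr_deriv ?_
    rw [mcross_self]
    module
  have hxdiff : Differentiable ℝ x := fun t => (hxd t).differentiableAt
  have hxc : Continuous x := hxdiff.continuous
  -- first derivative of β
  have hβ1 : deriv β = x := by
    funext t
    have hβfun : β = fun v => ∫ w in (0:ℝ)..v, x w := funext hβ
    rw [hβfun]
    exact (intervalIntegral.integral_hasDerivAt_right (hxc.intervalIntegrable _ _)
      (hxc.stronglyMeasurableAtFilter _ _) hxc.continuousAt).deriv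
  -- second derivative of β (global)
  have hβ2 : ∀ t, deriv (deriv β) t
      = (m * c) • deriv g t + (m * s) • mcross (g t) (deriv (deriv g) t) := by
    intro t; rw [hβ1]; exact (hxd t).deriv
  -- pointwise scalar identities on I
  have hab : ∀ t ∈ Set.Ioo a b, mink (g t) (deriv g t) = 0 := by
    intro t ht
    have hev : (fun r => mink (g r) (g r)) =ᶠ[nhds t] fun _ => (-1:ℝ) :=
      Filter.eventuallyEq_of_mem (hop.mem_nhds ht) (fun r hr => hg1 r hr)
    have h1 : deriv (fun r => mink (g r) (g r)) t = 0 := by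
      rw [hev.deriv_eq]; simp
    have h2 := (hasDerivAt_mink (hdg t).hasDerivAt (hdg t).hasDerivAt).deriv
    rw [h2, mink_symm (deriv g t) (g t)] at h1
    linarith
  have ha2 : ∀ t ∈ Set.Ioo a b, mink (deriv (deriv g) t) (g t) = -1 := by
    intro t ht
    have hev : (fun r => mink (g r) (deriv g r)) =ᶠ[nhds t] fun _ => (0:ℝ) :=
      Filter.eventuallyEq_of_mem (hop.mem_nhds ht) (fun r hr => hab r hr)
    have h1 : deriv (fun r => mink (g r) (deriv g r)) t = 0 := by
      rw [hev.deriv_eq]; simp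
    have h2 := (hasDerivAt_mink (hdg t).hasDerivAt (hdg1 t).hasDerivAt).deriv
    rw [h2] at h1
    have h3 := hg2 t ht
    rw [mink_symm]
    linarith [h1, h3]
  have hb2 : ∀ t ∈ Set.Ioo a b, mink (deriv (deriv g) t) (deriv g t) = 0 := by
    intro t ht
    have hev : (fun r => mink (deriv g r) (deriv g r)) =ᶠ[nhds t] fun _ => (1:ℝ) :=
      Filter.eventuallyEq_of_mem (hop.mem_nhds ht) (fun r hr => hg2 r hr)
    have h1 : deriv (fun r => mink (deriv g r) (deriv g r)) t = 0 := by
      rw [hev.deriv_eq]; simp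
    have h2 := (hasDerivAt_mink (hdg1 t).hasDerivAt (hdg1 t).hasDerivAt).deriv
    rw [h2, mink_symm (deriv g t) (deriv (deriv g) t)] at h1
    linarith
  -- decomposition of g''
  have hdecomp : ∀ t ∈ Set.Ioo a b,
      deriv (deriv g) t = g t + κg t • mcross (g t) (deriv g t) := by
    intro t ht
    have E := expand_basis (g t) (deriv g t) (deriv (deriv g) t)
    have hn2 : mink (deriv (deriv g) t) (mcross (g t) (deriv g t)) = κg t := by
      rw [mink_symm, mink_cross, ← hκg t]  -- mdet x y z vs needed
    rw [hab t ht, hg1 t ht, hg2 t ht, ha2 t ht, hb2 t ht, hn2] at E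
    have E' : (1:ℝ) • deriv (deriv g) t =
        (1:ℝ) • g t + (0:ℝ) • deriv g t + κg t • mcross (g t) (deriv g t) := by
      convert E using 2 <;> ring
    simpa using E'
  -- second derivative formula on I
  have hβ2' : ∀ t ∈ Set.Ioo a b,
      deriv (deriv β) t = (m * (c - s * κg t)) • deriv g t := by
    intro t ht
    rw [hβ2 t, hdecomp t ht, mcross_add_right, mcross_self, mcross_smul_right,
      mcross_cross_left, hg1 t ht, hab t ht]
    module
  -- third derivative on I
  have hβ3 : ∀ t ∈ Set.Ioo a b,
      deriv (deriv (deriv β)) t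
        = (m * deriv (fun r => c - s * κg r) t) • deriv g t
          + (m * (c - s * κg t)) • (g t + κg t • mcross (g t) (deriv g t)) := by
    intro t ht
    have hev : deriv (deriv β) =ᶠ[nhds t]
        (fun r => (m * (c - s * κg r)) • deriv g r) :=
      Filter.eventuallyEq_of_mem (hop.mem_nhds ht) (fun r hr => hβ2' r hr)
    rw [hev.deriv_eq]
    have hWd : Differentiable ℝ (fun r => c - s * κg r) :=
      (differentiable_const c).sub ((differentiable_const s).mul hκgd)
    have hWm : HasDerivAt (fun r => m * (c - s * κg r))
        (m * deriv (fun r => c - s * κg r) t) t :=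
      ((hWd t).hasDerivAt).const_mul m
    have H : HasDerivAt (fun r => (m * (c - s * κg r)) • deriv g r)
        ((m * (c - s * κg t)) • deriv (deriv g) t
          + (m * deriv (fun r => c - s * κg r) t) • deriv g t) t :=
      hWm.smul (hdg1 t).hasDerivAt
    rw [H.deriv, hdecomp t ht]
    module
  refine ⟨by rw [hA]; exact ne_of_gt (mul_pos hm hc0),
    by rw [hC]; exact mul_ne_zero (ne_of_gt hm) hs0, ?_⟩
  intro v hv
  -- notation
  set aa := g v with haadef
  set bb := deriv g v with hbbdef
  set n := mcross aa bb with hndef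
  set k := κg v with hkdef
  set W := c - s * k with hWdef
  set W' := deriv (fun r => c - s * κg r) v with hW'def
  have haa : mink aa aa = -1 := hg1 v hv
  have hbb : mink bb bb = 1 := hg2 v hv
  have habv : mink aa bb = 0 := hab v hv
  have hba : mink bb aa = 0 := by rw [mink_symm]; exact habv
  have hnn : mink n n = 1 := by
    rw [hndef, mink_cross_self, habv, haa, hbb]; norm_num
  have hna : mink n aa = 0 := by rw [hndef, mink_cross]; exact mdet_rep1 aa bb
  have hnb : mink n bb = 0 := by rw [hndef, mink_cross]; exact mdet_rep2 aa bb
  have han : mink aa n = 0 := by rw [mink_symm]; exact hna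
  have hbn : mink bb n = 0 := by rw [mink_symm]; exact hnb
  have hcan : mcross aa n = (-1:ℝ) • bb := by
    rw [hndef, mcross_cross_left, haa, habv]; module
  have hcbn : mcross bb n = -aa := by
    rw [mcross_anti bb n, hndef, mcross_cross_right, hbb, habv]; module
  -- W positive
  have hW0 : 0 < W := by
    have htξ : Real.tanh ξ = s / c := Real.tanh_eq_sinh_div_cosh ξ
    have h1 : W = c * (1 - Real.tanh ξ * k) := by
      rw [htξ, hWdef]; field_simp
    rw [h1]
    exact mul_pos hc0 (by linarith [hξκ v hv])
  -- vectors in basis form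
  have B1 : deriv β v = (m*c) • aa + (0:ℝ) • bb + (m*s) • n := by
    rw [hβ1, hxfun]; module
  have B2 : deriv (deriv β) v = (0:ℝ) • aa + (m*W) • bb + (0:ℝ) • n := by
    rw [hβ2' v hv]; module
  have B3 : deriv (deriv (deriv β)) v = (m*W) • aa + (m*W') • bb + (m*W*k) • n := by
    rw [hβ3 v hv]; module
  -- scalar computations
  have S1 : mink (deriv β v) (deriv β v) = -(m^2) := by
    rw [B1, mink_comb3, haa, hbb, hnn, habv, han, hbn]
    linear_combination (-(m^2)) * hcs
  have hX : mcross (deriv β v) (deriv (deriv β) v)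
      = (m^2*s*W) • aa + (0:ℝ) • bb + (m^2*c*W) • n := by
    rw [B1, B2, mcross_comb3, ← hndef, hcan, hcbn]
    module
  have S2 : mink (mcross (deriv β v) (deriv (deriv β) v))
      (mcross (deriv β v) (deriv (deriv β) v)) = (m^2*W)^2 := by
    rw [hX, mink_comb3, haa, hbb, hnn, habv, han, hbn]
    linear_combination (m^4*W^2) * hcs
  have S3 : mdet (deriv β v) (deriv (deriv β) v) (deriv (deriv (deriv β)) v)
      = m^3 * W^2 * (c*k - s) := by
    rw [← mink_cross, hX, B3, mink_comb3, haa, hbb, hnn, habv, han, hbn]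
    ring
  have Snorm : mnorm (mcross (deriv β v) (deriv (deriv β) v)) = m^2*W := by
    rw [mnorm, S2, abs_of_nonneg (sq_nonneg _), Real.sqrt_sq]
    positivity
  constructor
  · rw [S1]; nlinarith [hm]
  · have hpow : (-(mink (deriv β v) (deriv β v))) ^ (3/2 : ℝ) = m^3 := by
      rw [S1, neg_neg]
      rw [show (m^2 : ℝ) = m ^ ((2:ℕ):ℝ) from (Real.rpow_natCast m 2).symm,
        ← Real.rpow_mul hm.le, show ((2:ℕ):ℝ) * (3/2 : ℝ) = ((3:ℕ):ℝ) by norm_num,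
        Real.rpow_natCast]
    have hmne : (m:ℝ) ≠ 0 := ne_of_gt hm
    have hWne : W ≠ 0 := ne_of_gt hW0
    have hκv : κ v = W / m := by
      rw [hκdef v, hpow, Snorm]
      field_simp
    have hτv : τ v = (c*k - s) / m := by
      rw [hτdef v, Snorm, S3]
      field_simp
    rw [hκv, hτv, hA, hC, hWdef]
    field_simp
    linear_combination hcs
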